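/- Let F be a linear ordered field equipped with its order topology and X a completely F-regular space that is an almost P_F-space (every nonempty zero set Z(f) with f ∈ C(X,F) has nonempty interior in X). Then for an intermediate ring A(X,F), every maximal ideal of A(X,F) is a z°-ideal if and only if A(X,F) = C(X,F). -/

import Mathlib

open Set

/-- `Pz a` : the intersection of all minimal prime ideals of `R` which contain `a`. -/
def Pz {R : Type*} [CommRing R] (a : R) : Set R :=
  ⋂ P ∈ {P : Ideal R | P ∈ minimalPrimes R ∧ a ∈ P}, (P : Set R)

/-- A proper ideal `I` is a `z°`-ideal if `Pz a ⊆ I` for every `a ∈ I`. -/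
def IsZoIdeal {R : Type*} [CommRing R] (I : Ideal R) : Prop :=
  I ≠ ⊤ ∧ ∀ a ∈ I, Pz a ⊆ (I : Set R)

/-- The zero set `Z(f)` of a continuous function `f`. -/
def ZSet {X F : Type*} [TopologicalSpace X] [TopologicalSpace F] [Zero F]
    (f : C(X, F)) : Set X := {x | f x = 0}

/-- `f` is bounded over `X` (i.e. `f ∈ B(X,F)`). -/
def BddF {X F : Type*} [TopologicalSpace X] [Field F] [LinearOrder F] [IsStrictOrderedRing F] [TopologicalSpace F]
    (f : C(X, F)) : Prop := ∃ l : F, 0 < l ∧ ∀ x, |f x| ≤ l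

/-- `X` is completely `F`-regular: Hausdorff, and points can be separated from closed
sets by bounded `F`-valued continuous functions. -/
def CompletelyFRegular (X F : Type*) [TopologicalSpace X] [Field F] [LinearOrder F] [IsStrictOrderedRing F]
    [TopologicalSpace F] : Prop :=
  T2Space X ∧ ∀ K : Set X, IsClosed K → ∀ x ∉ K, ∃ f : C(X, F),
    BddF f ∧ f x = 0 ∧ ∀ k ∈ K, f k = 1

/-- `A` is an intermediate ring: a subring of `C(X,F)` containing all of `B(X,F)`. -/
def IsIntermediate {X F : Type*} [TopologicalSpace X] [Field F] [LinearOrder F] [IsStrictOrderedRing F]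
    [TopologicalSpace F] [OrderTopology F] (A : Subring C(X, F)) : Prop :=
  ∀ f : C(X, F), BddF f → f ∈ A

/-- An ideal of closed sets in `X`: a nonempty family of closed sets, closed under
finite unions and under passing to closed subsets. -/
def IsIdealOfClosedSets {X : Type*} [TopologicalSpace X] (P : Set (Set X)) : Prop :=
  P.Nonempty ∧ (∀ A ∈ P, IsClosed A) ∧ (∀ A ∈ P, ∀ B ∈ P, A ∪ B ∈ P) ∧
    ∀ C : Set X, IsClosed C → ∀ A ∈ P, C ⊆ A → C ∈ P

/-- `X` is an almost `P_F`-space: every nonempty zero set has nonempty interior. -/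
def AlmostPF (X F : Type*) [TopologicalSpace X] [Field F] [LinearOrder F] [IsStrictOrderedRing F]
    [TopologicalSpace F] : Prop :=
  ∀ f : C(X, F), (ZSet f).Nonempty → (interior (ZSet f)).Nonempty

/-!
A non-zero-divisor lies in no minimal prime, so `P_u` is the whole ring for such `u`; hence if
every maximal ideal is a z°-ideal, every non-zero-divisor is a unit. For `g ∉ A`, the bounded
function `u = 1 / (1 + g²)` is a non-zero-divisor of `A` whose inverse `1 + g²` cannot lie in `A`,
since `g = (g u) (1 + g²)` with `g u` bounded.

Conversely, in `C(X, F)` maximal ideals are z-ideals, so it suffices that every `b ∈ P_a`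
vanishes on `Z(a)`. At a point `y` of the interior of `Z(a)`, a function `g` with `g y = 0` and
`g = 1` off that interior gives `a (g - 1) = 0` with `g - 1 ∉ ker(ev_y)`; so every minimal prime
below `ker(ev_y)` contains `a`, hence `b`, and `b y = 0`. In an almost `P_F`-space every zero set
lies in the closure of its interior (apply the hypothesis to `a² + g²` for a `g` separating a
point from the complement of a neighbourhood), and `Z(b)` is closed.
-/

def MaximalIdealsAreZo (R : Type*) [CommRing R] : Prop :=
  ∀ M : Ideal R, M.IsMaximal → ∀ a ∈ M, Pz a ⊆ (M : Set R)

section CommRing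

variable {R S : Type*} [CommRing R] [CommRing S]

lemma mem_Pz_iff {a b : R} : b ∈ Pz a ↔ ∀ P ∈ minimalPrimes R, a ∈ P → b ∈ P := by
  simp [Pz, and_imp]

lemma Pz_eq_univ_of_mem_nonZeroDivisors {a : R} (ha : a ∈ nonZeroDivisors R) : Pz a = univ :=
  eq_univ_of_forall fun _ => mem_Pz_iff.2 fun _ hP haP =>
    absurd ha (notMem_nonZeroDivisors_of_mem_mem_minimalPrimes haP hP)

lemma MaximalIdealsAreZo.isUnit_of_mem_nonZeroDivisors (h : MaximalIdealsAreZo R) {a : R}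
    (ha : a ∈ nonZeroDivisors R) : IsUnit a := by
  by_contra hunit
  obtain ⟨M, hM, haM⟩ := exists_max_ideal_of_mem_nonunits hunit
  have h1 : (1 : R) ∈ M := h M hM a haM (by simp [Pz_eq_univ_of_mem_nonZeroDivisors ha])
  exact hM.ne_top (M.eq_top_iff_one.2 h1)

lemma map_mem_Pz (e : R ≃+* S) {a b : R} (hb : b ∈ Pz a) : e b ∈ Pz (e a) := by
  refine mem_Pz_iff.2 fun Q hQ hQa => ?_
  have hQ' := Ideal.minimalPrimes_comap_of_surjective (f := (e : R →+* S)) e.surjective hQ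
  rw [Ideal.comap_bot_of_injective (e : R →+* S) e.injective] at hQ'
  exact mem_Pz_iff.1 hb _ hQ' hQa

lemma MaximalIdealsAreZo.of_ringEquiv (h : MaximalIdealsAreZo R) (e : R ≃+* S) :
    MaximalIdealsAreZo S := by
  intro M hM a haM b hb
  have hM' : (M.comap e).IsMaximal := Ideal.comap_isMaximal_of_surjective e e.surjective
  have hb' := h _ hM' (e.symm a) (Ideal.mem_comap.2 (by simpa using haM)) (map_mem_Pz e.symm hb)
  simpa using Ideal.mem_comap.1 hb'

end CommRing

@[simp]
lemma mem_ZSet {X F : Type*} [TopologicalSpace X] [TopologicalSpace F] [Zero F] {f : C(X, F)}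
    {x : X} : x ∈ ZSet f ↔ f x = 0 :=
  Iff.rfl

lemma isClosed_ZSet {X F : Type*} [TopologicalSpace X] [TopologicalSpace F] [Zero F] [T2Space F]
    (f : C(X, F)) : IsClosed (ZSet f) :=
  isClosed_eq f.continuous continuous_const

section ContinuousMap

variable {X F : Type*} [TopologicalSpace X] [Field F] [LinearOrder F] [IsStrictOrderedRing F]
  [TopologicalSpace F] [OrderTopology F]

lemma ZSet_mul_self_add_mul_self (f g : C(X, F)) :
    ZSet (f * f + g * g) = ZSet f ∩ ZSet g := by
  ext x
  simp [mul_self_add_mul_self_eq_zero]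

lemma isUnit_of_forall_ne_zero {f : C(X, F)} (hf : ∀ x, f x ≠ 0) : IsUnit f :=
  isUnit_iff_exists_inv.2
    ⟨⟨fun x => (f x)⁻¹, f.continuous.inv₀ hf⟩, by ext x; exact mul_inv_cancel₀ (hf x)⟩

lemma Ideal.IsMaximal.mem_of_ZSet_subset {M : Ideal C(X, F)} (hM : M.IsMaximal)
    {f g : C(X, F)} (hf : f ∈ M) (hfg : ZSet f ⊆ ZSet g) : g ∈ M := by
  by_contra hg
  obtain ⟨h, i, hi, hhgi⟩ := hM.exists_inv hg
  -- `i = 1` on `Z(g) ⊇ Z(f)`, so `i² + f²` vanishes nowhere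
  have hunit : IsUnit (i * i + f * f) := isUnit_of_forall_ne_zero fun x hx => by
    obtain ⟨hix, hfx⟩ : x ∈ ZSet i ∩ ZSet f := ZSet_mul_self_add_mul_self i f ▸ hx
    have := congr($hhgi x)
    simp only [ContinuousMap.add_apply, ContinuousMap.mul_apply, ContinuousMap.one_apply] at this
    rw [show g x = 0 from hfg hfx, show i x = 0 from hix] at this
    simp at this
  exact hM.ne_top (M.eq_top_of_isUnit_mem
    (M.add_mem (M.mul_mem_left i hi) (M.mul_mem_left f hf)) hunit)

lemma apply_eq_zero_of_mem_Pz (hX : CompletelyFRegular X F) {a b : C(X, F)} (hb : b ∈ Pz a)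
    {y : X} (hy : y ∈ interior (ZSet a)) : b y = 0 := by
  let ev := ContinuousMap.evalAlgHom F F (X := X) y
  have := RingHom.ker_isPrime ev
  obtain ⟨P, hP, hPev⟩ := Ideal.exists_minimalPrimes_le (I := ⊥) (J := RingHom.ker ev) bot_le
  obtain ⟨g, -, hgy, hg1⟩ :=
    hX.2 (interior (ZSet a))ᶜ isOpen_interior.isClosed_compl y (not_not.2 hy)
  have hag : a * (g - 1) = 0 := by
    ext z
    by_cases hz : z ∈ interior (ZSet a)
    · simp [mem_ZSet.1 (interior_subset hz)]
    · simp [hg1 z hz]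
  have hg : g - 1 ∉ P := fun h => by simpa [ev, hgy] using hPev h
  have haP : a ∈ P := (hP.1.1.mem_or_mem (hag ▸ P.zero_mem)).resolve_right hg
  simpa [ev] using hPev (mem_Pz_iff.1 hb P hP haP)

lemma ZSet_subset_closure_interior (hX : CompletelyFRegular X F) (hap : AlmostPF X F)
    (a : C(X, F)) : ZSet a ⊆ closure (interior (ZSet a)) := by
  refine fun x hx => mem_closure_iff.2 fun U hU hxU => ?_
  obtain ⟨g, -, hgx, hg1⟩ := hX.2 Uᶜ hU.isClosed_compl x (not_not.2 hxU)
  obtain ⟨y, hy⟩ := hap (a * a + g * g) ⟨x, by rw [ZSet_mul_self_add_mul_self]; exact ⟨hx, hgx⟩⟩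
  rw [ZSet_mul_self_add_mul_self, interior_inter] at hy
  refine ⟨y, not_not.1 fun hyU => ?_, hy.1⟩
  have hgy : g y = 0 := mem_ZSet.1 (interior_subset hy.2)
  exact zero_ne_one (hgy.symm.trans (hg1 y hyU))

lemma ZSet_subset_of_mem_Pz (hX : CompletelyFRegular X F) (hap : AlmostPF X F)
    {a b : C(X, F)} (hb : b ∈ Pz a) : ZSet a ⊆ ZSet b :=
  (ZSet_subset_closure_interior hX hap a).trans <|
    closure_minimal (fun _ hy => apply_eq_zero_of_mem_Pz hX hb hy) (isClosed_ZSet b)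

lemma maximalIdealsAreZo_continuousMap (hX : CompletelyFRegular X F) (hap : AlmostPF X F) :
    MaximalIdealsAreZo C(X, F) :=
  fun _ hM _ ha _ hb => hM.mem_of_ZSet_subset ha (ZSet_subset_of_mem_Pz hX hap hb)

lemma IsIntermediate.mem_of_forall_mem_nonZeroDivisors_isUnit {A : Subring C(X, F)}
    (hA : IsIntermediate A) (h : ∀ u ∈ nonZeroDivisors A, IsUnit u) (g : C(X, F)) : g ∈ A := by
  let w : C(X, F) := 1 + g * g
  have hw : ∀ x, 1 ≤ w x := fun x => by simp [w, mul_self_nonneg]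
  have hw_pos : ∀ x, 0 < w x := fun x => one_pos.trans_le (hw x)
  have hw0 : ∀ x, w x ≠ 0 := fun x => (hw_pos x).ne'
  let u : C(X, F) := ⟨fun x => (w x)⁻¹, w.continuous.inv₀ hw0⟩
  have hu : BddF u := ⟨1, one_pos, fun x => by
    simpa [u, abs_of_pos (hw_pos x)] using inv_le_one_of_one_le₀ (hw x)⟩
  have hgu : BddF (g * u) := ⟨1, one_pos, fun x => by
    have : |g x| ≤ w x := by
      simp only [w, ContinuousMap.add_apply, ContinuousMap.mul_apply, ContinuousMap.one_apply]
      nlinarith [abs_mul_abs_self (g x), abs_nonneg (g x)]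
    simpa [u, ← div_eq_mul_inv, abs_div, abs_of_pos (hw_pos x), div_le_one (hw_pos x)]⟩
  have hu_reg : (⟨u, hA u hu⟩ : A) ∈ nonZeroDivisors A := by
    refine mem_nonZeroDivisors_iff_right.2 fun z hz => Subtype.ext <| ContinuousMap.ext fun x => ?_
    have := congr($(congrArg Subtype.val hz) x)
    simpa [u, hw0 x] using this
  obtain ⟨⟨v, hvA⟩, huv⟩ := (h _ hu_reg).exists_right_inv
  have hvw : v = w := ContinuousMap.ext fun x => by
    have := congr($(congrArg Subtype.val huv) x)
    simp only [u, Subring.coe_mul, ContinuousMap.mul_apply, ContinuousMap.coe_mk,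
      OneMemClass.coe_one, ContinuousMap.one_apply] at this
    exact ((inv_mul_eq_one₀ (hw0 x)).1 this).symm
  have hg : g = g * u * w := ContinuousMap.ext fun x => by simp [u, hw0 x]
  rw [hg]
  exact A.mul_mem (hA _ hgu) (hvw ▸ hvA)

end ContinuousMap

/-- For an almost P_F-space X and an intermediate ring A(X,F): every maximal ideal of
A(X,F) is a z°-ideal iff A(X,F) = C(X,F). -/
theorem stmt16 {X F : Type*} [TopologicalSpace X] [Field F] [LinearOrder F] [IsStrictOrderedRing F]
    [TopologicalSpace F] [OrderTopology F]
    (hX : CompletelyFRegular X F) (hap : AlmostPF X F)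
    (A : Subring C(X, F)) (hA : IsIntermediate A) :
    (∀ M : Ideal A, M.IsMaximal → ∀ a ∈ M, Pz a ⊆ (M : Set A)) ↔ A = ⊤ := by
  constructor
  · intro h
    exact (Subring.eq_top_iff' A).2 <|
      hA.mem_of_forall_mem_nonZeroDivisors_isUnit fun _ hu =>
        MaximalIdealsAreZo.isUnit_of_mem_nonZeroDivisors h hu
  · rintro rfl
    exact (maximalIdealsAreZo_continuousMap hX hap).of_ringEquiv Subring.topEquiv.symm
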